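/- For every i ≥ 2, the composite d_{i-1} ∘ d_i : kC^i ⊗_{Λ_0} Λ → kC^{i-2} ⊗_{Λ_0} Λ is zero; that is, the sequence ⋯ → kC^2⊗_{Λ_0}Λ →(d_2) kC^1⊗_{Λ_0}Λ →(d_1) kC^0⊗_{Λ_0}Λ → 0 is a chain complex of right Λ-modules. -/

import Mathlib

set_option maxRecDepth 16000
set_option linter.unusedSectionVars false
set_option maxHeartbeats 1000000

open Finsupp

variable (k : Type) [Field k] (X : Type) [PartialOrder X] [Fintype X] [DecidableEq X]

/-- Ambient type in which the `i`-cycles live: `Amb 0 = X`,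
`Amb (i+1) = (Amb i →₀ k) × X`. -/
def Amb : ℕ → Type
  | 0 => X
  | i + 1 => ((Amb i) →₀ k) × X

/-- The "vertex" (second coordinate) of an element of `Amb i`. -/
def vtx : ∀ i : ℕ, Amb k X i → X
  | 0, a => a
  | _ + 1, p => p.2

/-- The ambient boundary map `∂_{i+1} : k C^{i+1} → k C^i`, defined on the whole
free module `Amb (i+1) →₀ k` by `(w, z) ↦ w`. -/
noncomputable def bd (i : ℕ) : (Amb k X (i + 1) →₀ k) →ₗ[k] (Amb k X i →₀ k) :=
  Finsupp.linearCombination k (fun p : Amb k X (i + 1) => p.1)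

/-- `(ker ∂_{i+1})_z`: the subspace of elements of `ker ∂_{i+1}`, supported on `C^{i+1}`,
all of whose support elements have second coordinate `< z`. -/
noncomputable def Kz (C : ∀ i : ℕ, Set (Amb k X i)) (i : ℕ) (z : X) :
    Submodule k (Amb k X (i + 1) →₀ k) :=
  LinearMap.ker (bd k X i) ⊓ Finsupp.supported k k (C (i + 1)) ⊓
    Finsupp.supported k k {p : Amb k X (i + 1) | vtx k X (i + 1) p < z}

/-- `(ker ∂_{i+1})_{z^-} = Σ_{z' ⋖ z} (ker ∂_{i+1})_{z'}`. -/
noncomputable def Kpred (C : ∀ i : ℕ, Set (Amb k X i)) (i : ℕ) (z : X) :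
    Submodule k (Amb k X (i + 1) →₀ k) :=
  ⨆ z' ∈ {z' : X | z' ⋖ z}, Kz k X C i z'

/-- `B^{i+2}_z'`: the set of `w` with `(w, z) ∈ C^{i+2}`. -/
def Bset (C : ∀ i : ℕ, Set (Amb k X i)) (i : ℕ) (z : X) : Set (Amb k X (i + 1) →₀ k) :=
  {w | (⟨w, z⟩ : Amb k X (i + 2)) ∈ C (i + 2)}

/-- The data of an admissible choice of `i`-cycles `C^i` for the poset `X` at the point `x`:
`C^0 = {x}`, `C^1 = {(x,y) : y ∈ x⁺}` and, recursively, for each `z` the set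
`B^{i+2}_z' = {w | (w,z) ∈ C^{i+2}}` is a basis of a complement of `(ker ∂_{i+1})_{z⁻}`
inside `(ker ∂_{i+1})_z`. -/
structure CycleData (x : X) : Type 1 where
  C : ∀ i : ℕ, Set (Amb k X i)
  hC0 : C 0 = {x}
  hC1 : C 1 = {p : Amb k X 1 | ∃ y : X, x ⋖ y ∧ p = ⟨Finsupp.single x 1, y⟩}
  indep : ∀ (i : ℕ) (z : X),
    LinearIndependent k (Subtype.val : Bset k X C i z → (Amb k X (i + 1) →₀ k))
  disj : ∀ (i : ℕ) (z : X),
    Submodule.span k (Bset k X C i z) ⊓ Kpred k X C i z = ⊥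
  compl : ∀ (i : ℕ) (z : X),
    Submodule.span k (Bset k X C i z) ⊔ Kpred k X C i z = Kz k X C i z

variable [DecidableRel (α := X) (· ≤ ·)]

instance : DecidableRel (α := X) (· < ·) := fun a b =>
  decidable_of_iff (a ≤ b ∧ ¬ b ≤ a) lt_iff_le_not_ge.symm

instance : LocallyFiniteOrder X := Fintype.toLocallyFiniteOrder

/-- The incidence algebra `Λ = kQ/I` of the poset `X`: functions on the pairs `a ≤ b`,
`c_{a,b}` corresponding to the characteristic function of `(a,b)`. -/
abbrev Lam := IncidenceAlgebra k X

/-- `Λ₀`, the (commutative, semisimple) subalgebra of `Λ` spanned by the stationary paths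
`c_a`, identified with `k^X`. -/
abbrev Lam0 := X → k

/-- The path `c_{a,b}` for `a ≤ b` (and junk value `0` if `a ≰ b`). -/
def cpath (a b : X) : Lam k X :=
  ⟨fun a' b' => if a' = a ∧ b' = b ∧ a ≤ b then 1 else 0, by
    intro a' b' h
    simp only [ite_eq_right_iff, one_ne_zero]
    rintro ⟨rfl, rfl, hab⟩
    exact (h hab).elim⟩

/-- The stationary path `c_a = c_{a,a}`. -/
def statp (a : X) : Lam k X := cpath k X a a

/-- The embedding of `Λ₀ = k^X` into `Λ` as the span of the stationary paths. -/
def diagHom : Lam0 k X →+* Lam k X where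
  toFun f := ⟨fun a b => if a = b then f a else 0, by
    intro a b h
    simp only [ite_eq_right_iff]
    rintro rfl
    exact (h le_rfl).elim⟩
  map_one' := by
    ext a b _
    simp [IncidenceAlgebra.one_apply]
  map_mul' f g := by
    ext a b hab
    rcases eq_or_ne a b with rfl | hne
    · simp [IncidenceAlgebra.mul_apply]
    · simp only [IncidenceAlgebra.coe_mk, IncidenceAlgebra.mul_apply, if_neg hne]
      rw [Finset.sum_eq_zero]
      intro x hx
      rcases eq_or_ne a x with rfl | hax
      · rw [if_neg hne]; ring
      · rw [if_neg hax]; ring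
  map_zero' := by ext a b _; simp
  map_add' f g := by
    ext a b hab
    rcases eq_or_ne a b with rfl | hne
    · simp [IncidenceAlgebra.add_apply]
    · simp [IncidenceAlgebra.add_apply, if_neg hne]

/-- `Λ` is a `Λ₀`-module via left multiplication through `diagHom`. -/
noncomputable instance : Module (Lam0 k X) (Lam k X) := Module.compHom _ (diagHom k X)

/-- The endomorphism of the free module `Amb i →₀ k` given by `f ∈ Λ₀ = k^X`, where `c_a`
acts on a basis element `p` by `δ_{vtx p, a}`. -/
noncomputable def phiAmbFun (i : ℕ) (f : Lam0 k X) :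
    (Amb k X i →₀ k) →ₗ[k] (Amb k X i →₀ k) :=
  Finsupp.lsum k fun p => f (vtx k X i p) • Finsupp.lsingle p

theorem phiAmbFun_single (i : ℕ) (f : Lam0 k X) (p : Amb k X i) (c : k) :
    phiAmbFun k X i f (Finsupp.single p c) = f (vtx k X i p) • Finsupp.single p c := by
  rw [phiAmbFun, Finsupp.lsum_single, LinearMap.smul_apply, Finsupp.lsingle_apply]

/-- The action of `Λ₀` on the free module `Amb i →₀ k` as a ring homomorphism to
endomorphisms. -/
noncomputable def phiAmb (i : ℕ) : Lam0 k X →+* Module.End k (Amb k X i →₀ k) where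
  toFun f := phiAmbFun k X i f
  map_one' := by
    apply Finsupp.lhom_ext
    intro p c
    rw [phiAmbFun_single, Module.End.one_apply, Pi.one_apply, one_smul]
  map_mul' f g := by
    apply Finsupp.lhom_ext
    intro p c
    show phiAmbFun k X i (f * g) (Finsupp.single p c) =
      (phiAmbFun k X i f * phiAmbFun k X i g) (Finsupp.single p c)
    rw [Module.End.mul_apply, phiAmbFun_single, phiAmbFun_single, map_smul,
      phiAmbFun_single, smul_smul, Pi.mul_apply, mul_comm]
  map_zero' := by
    apply Finsupp.lhom_ext
    intro p c
    rw [phiAmbFun_single, Pi.zero_apply, zero_smul, LinearMap.zero_apply]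
  map_add' f g := by
    apply Finsupp.lhom_ext
    intro p c
    rw [phiAmbFun_single, LinearMap.add_apply, phiAmbFun_single, phiAmbFun_single,
      Pi.add_apply, add_smul]

theorem phiAmb_apply (i : ℕ) (f : Lam0 k X) (g : Amb k X i →₀ k) (q : Amb k X i) :
    phiAmb k X i f g q = f (vtx k X i q) * g q := by
  induction g using Finsupp.induction_linear with
  | zero => simp
  | add a b ha hb => simp [ha, hb, mul_add]
  | single p c =>
    show phiAmbFun k X i f (Finsupp.single p c) q = _
    rw [phiAmbFun_single]
    rcases eq_or_ne p q with rfl | hpq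
    · simp [Finsupp.single_apply]
    · classical
      rw [Finsupp.smul_apply, Finsupp.single_apply, if_neg hpq, smul_zero, mul_zero]

theorem phiAmb_mem_supported (i : ℕ) (f : Lam0 k X) (s : Set (Amb k X i))
    (g : Amb k X i →₀ k) (hg : g ∈ Finsupp.supported k k s) :
    phiAmb k X i f g ∈ Finsupp.supported k k s := by
  rw [Finsupp.mem_supported'] at hg ⊢
  intro p hp
  rw [phiAmb_apply, hg p hp, mul_zero]

/-- The action of `Λ₀` on `kC^i` (the span of the `i`-cycles). -/
noncomputable def phiKC (C : ∀ i : ℕ, Set (Amb k X i)) (i : ℕ) :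
    Lam0 k X →+* Module.End k ↥(Finsupp.supported k k (C i)) where
  toFun f := (phiAmb k X i f).restrict
    (fun g hg => phiAmb_mem_supported k X i f (C i) g hg)
  map_one' := by
    apply LinearMap.ext
    rintro ⟨g, hg⟩
    apply Subtype.ext
    simp [LinearMap.restrict_apply]
  map_mul' f g := by
    apply LinearMap.ext
    rintro ⟨h, hh⟩
    apply Subtype.ext
    simp [LinearMap.restrict_apply]
  map_zero' := by
    apply LinearMap.ext
    rintro ⟨g, hg⟩
    apply Subtype.ext
    simp [LinearMap.restrict_apply]
  map_add' f g := by
    apply LinearMap.ext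
    rintro ⟨h, hh⟩
    apply Subtype.ext
    simp [LinearMap.restrict_apply]

/-- `kC^i` as a `Λ₀`-module. -/
noncomputable instance (C : ∀ i : ℕ, Set (Amb k X i)) (i : ℕ) :
    Module (Lam0 k X) ↥(Finsupp.supported k k (C i)) :=
  Module.compHom _ (phiKC k X C i)

open scoped TensorProduct

/-- Right multiplication by `a ∈ Λ` as a `Λ₀`-linear endomorphism of `Λ`. -/
noncomputable def rmulL (a : Lam k X) : Lam k X →ₗ[Lam0 k X] Lam k X where
  toFun b := b * a
  map_add' b c := add_mul b c a
  map_smul' f b := by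
    show (diagHom k X f * b) * a = diagHom k X f * (b * a)
    rw [mul_assoc]

/-- The right `Λ`-module structure (i.e. left `Λᵐᵒᵖ`-module structure) on `M ⊗_{Λ₀} Λ`,
`Λ` being a `Λ₀`-`Λ`-bimodule via right multiplication. -/
noncomputable instance modOpTensor (M : Type) [AddCommGroup M] [Module (Lam0 k X) M] :
    Module (Lam k X)ᵐᵒᵖ (M ⊗[Lam0 k X] Lam k X) where
  smul a t := LinearMap.lTensor M (rmulL k X a.unop) t
  one_smul t := by
    show LinearMap.lTensor M (rmulL k X (1 : (Lam k X)ᵐᵒᵖ).unop) t = t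
    have : rmulL k X ((1 : (Lam k X)ᵐᵒᵖ).unop) = LinearMap.id := by
      apply LinearMap.ext; intro b
      show b * 1 = b
      rw [mul_one]
    rw [this, LinearMap.lTensor_id, LinearMap.id_apply]
  mul_smul a b t := by
    show LinearMap.lTensor M (rmulL k X (a * b).unop) t =
      LinearMap.lTensor M (rmulL k X a.unop) (LinearMap.lTensor M (rmulL k X b.unop) t)
    have : rmulL k X ((a * b).unop) = (rmulL k X a.unop).comp (rmulL k X b.unop) := by
      apply LinearMap.ext; intro c
      show c * (b.unop * a.unop) = (c * b.unop) * a.unop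
      rw [mul_assoc]
    rw [this, LinearMap.lTensor_comp, LinearMap.comp_apply]
  smul_zero a := map_zero _
  smul_add a s t := map_add _ s t
  add_smul a b t := by
    show LinearMap.lTensor M (rmulL k X (a + b).unop) t =
      LinearMap.lTensor M (rmulL k X a.unop) t + LinearMap.lTensor M (rmulL k X b.unop) t
    have : rmulL k X ((a + b).unop) = rmulL k X a.unop + rmulL k X b.unop := by
      apply LinearMap.ext; intro c
      show c * (a.unop + b.unop) = c * a.unop + c * b.unop
      rw [mul_add]
    rw [this, LinearMap.lTensor_add, LinearMap.add_apply]
  zero_smul t := by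
    show LinearMap.lTensor M (rmulL k X (0 : (Lam k X)ᵐᵒᵖ).unop) t = 0
    have : rmulL k X ((0 : (Lam k X)ᵐᵒᵖ).unop) = 0 := by
      apply LinearMap.ext; intro c
      show c * 0 = 0
      rw [mul_zero]
    rw [this, LinearMap.lTensor_zero, LinearMap.zero_apply]

theorem opSmul_tmul (M : Type) [AddCommGroup M] [Module (Lam0 k X) M]
    (a : Lam k X) (m : M) (b : Lam k X) :
    (MulOpposite.op a) • (m ⊗ₜ[Lam0 k X] b) = m ⊗ₜ[Lam0 k X] (b * a) := rfl

/-- The sum `q_z = Σ_{u ≤ z} c_{u,z}` of the paths ending at `z`. -/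
noncomputable def qel (z : X) : Lam k X :=
  ∑ u ∈ Finset.univ.filter (· ≤ z), cpath k X u z

/-- `kC^i ⊗_{Λ₀} Λ`, the `i`-th term of the projective resolution, a right `Λ`-module. -/
noncomputable def TCmod (C : ∀ i : ℕ, Set (Amb k X i)) (i : ℕ) : Type :=
  ↥(Finsupp.supported k k (C i)) ⊗[Lam0 k X] Lam k X

noncomputable instance (C : ∀ i : ℕ, Set (Amb k X i)) (i : ℕ) : AddCommGroup (TCmod k X C i) :=
  @TensorProduct.addCommGroup (Lam0 k X) _ ↥(Finsupp.supported k k (C i)) (Lam k X) _ _ _ _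

noncomputable instance (C : ∀ i : ℕ, Set (Amb k X i)) (i : ℕ) :
    Module (Lam k X)ᵐᵒᵖ (TCmod k X C i) :=
  modOpTensor k X ↥(Finsupp.supported k k (C i))

/-- The basis element of `kC^i` given by `p ∈ C^i`. -/
noncomputable def bas (C : ∀ i : ℕ, Set (Amb k X i)) (i : ℕ) (p : Amb k X i)
    (hp : p ∈ C i) : ↥(Finsupp.supported k k (C i)) :=
  ⟨Finsupp.single p 1, Finsupp.single_mem_supported k 1 hp⟩

/-- The generator `(w,z) ⊗ 1` of `kC^i ⊗_{Λ₀} Λ` given by `(w,z) ∈ C^i`. -/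
noncomputable def gen (C : ∀ i : ℕ, Set (Amb k X i)) (i : ℕ) (p : Amb k X i)
    (hp : p ∈ C i) : TCmod k X C i :=
  bas k X C i p hp ⊗ₜ[Lam0 k X] 1

/-- Evaluation of an element of `Λ` at the stationary pair `(z,z)`, a ring homomorphism. -/
noncomputable def evalHom (z : X) : Lam k X →+* k where
  toFun f := f z z
  map_one' := by simp
  map_mul' f g := by
    show (f * g) z z = f z z * g z z
    rw [IncidenceAlgebra.mul_apply, Finset.Icc_self, Finset.sum_singleton]
  map_zero' := rfl
  map_add' f g := rfl

/-- The simple right `Λ`-module `S_z` at the vertex `z`: a copy of `k` on which `λ ∈ Λ`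
acts by multiplication by `λ(z,z)`. -/
def SMod (_z : X) : Type := k

noncomputable instance (z : X) : AddCommGroup (SMod k X z) := inferInstanceAs (AddCommGroup k)
noncomputable instance (z : X) : Module k (SMod k X z) := inferInstanceAs (Module k k)
instance (z : X) : One (SMod k X z) := ⟨(1 : k)⟩

/-- The right `Λ`-module structure on `S_z`. -/
noncomputable instance (z : X) : Module (Lam k X)ᵐᵒᵖ (SMod k X z) :=
  Module.compHom k ((evalHom k X z).fromOpposite (fun a b => mul_comm _ _))

/-- The right `Λ₀`-module structure on `S_z` (the restriction of the `Λ`-action). -/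
noncomputable instance (z : X) : Module (Lam0 k X) (SMod k X z) :=
  Module.compHom k (Pi.evalRingHom (fun _ : X => k) z)

instance (z : X) : SMulCommClass (Lam k X)ᵐᵒᵖ k (SMod k X z) where
  smul_comm a c m := mul_left_comm (evalHom k X z (MulOpposite.unop a)) c m

instance (z : X) : SMulCommClass k (Lam k X)ᵐᵒᵖ (SMod k X z) where
  smul_comm c a m := (mul_left_comm (evalHom k X z (MulOpposite.unop a)) c m).symm

/-- The indecomposable projective right `Λ`-module `P_z = c_z Λ`. -/
noncomputable def PMod (z : X) : Submodule (Lam k X)ᵐᵒᵖ (Lam k X) :=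
  Submodule.span (Lam k X)ᵐᵒᵖ {statp k X z}

/-- The radical `M · J(Λ)` of a right `Λ`-module `M`, where `J(Λ)` is the Jacobson radical. -/
noncomputable def radMod (M : Type) [AddCommGroup M] [Module (Lam k X)ᵐᵒᵖ M] :
    Submodule (Lam k X)ᵐᵒᵖ M :=
  Submodule.span (Lam k X)ᵐᵒᵖ
    {m | ∃ a ∈ Ideal.jacobson (⊥ : Ideal (Lam k X)ᵐᵒᵖ), ∃ n : M, m = a • n}

/-- `|B^i_b|`: the number of `i`-cycles with second coordinate `b`. -/
noncomputable def Bcard (C : ∀ i : ℕ, Set (Amb k X i)) (i : ℕ) (b : X) : ℕ :=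
  Set.ncard {p : Amb k X i | p ∈ C i ∧ vtx k X i p = b}

/-- The predicate singling out the differentials `d_{i+1} : kC^{i+1} ⊗_{Λ₀} Λ → kC^i ⊗_{Λ₀} Λ`
of the resolution: `d ((w,z) ⊗ 1) = w ⊗ q_z` for `(w,z) ∈ C^{i+1}`. (These properties determine
the maps `d` uniquely.) -/
def IsDiff {x : X} (D : CycleData k X x)
    (d : ∀ i : ℕ, TCmod k X D.C (i + 1) →ₗ[(Lam k X)ᵐᵒᵖ] TCmod k X D.C i) : Prop :=
  ∀ (i : ℕ) (p : Amb k X (i + 1)) (hp : p ∈ D.C (i + 1))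
    (w : ↥(Finsupp.supported k k (D.C i))) (_hw : (w : Amb k X i →₀ k) = p.1),
    d i (gen k X D.C (i + 1) p hp) = w ⊗ₜ[Lam0 k X] qel k X (vtx k X (i + 1) p)

section Auxiliary

noncomputable instance modOpTensorSupp (C : ∀ i : ℕ, Set (Amb k X i)) (i : ℕ) :
    Module (Lam k X)ᵐᵒᵖ (↥(Finsupp.supported k k (C i)) ⊗[Lam0 k X] Lam k X) :=
  modOpTensor k X ↥(Finsupp.supported k k (C i))

lemma cpath_apply (u z a b : X) :
    cpath k X u z a b = if a = u ∧ b = z ∧ u ≤ z then 1 else 0 := rfl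

lemma qel_apply (z a b : X) : qel k X z a b = if b = z ∧ a ≤ z then 1 else 0 := by
  have h : qel k X z a b = ∑ u ∈ Finset.univ.filter (· ≤ z), cpath k X u z a b :=
    map_sum (AddMonoidHom.mk' (fun f : Lam k X => f a b) (fun f g => rfl)) _ _
  rw [h]
  by_cases hb : b = z ∧ a ≤ z
  · have hmem : a ∈ Finset.univ.filter (· ≤ z) :=
      Finset.mem_filter.2 ⟨Finset.mem_univ a, hb.2⟩
    rw [if_pos hb,
      Finset.sum_eq_single_of_mem a hmem
        (fun u _ hne => by
          rw [cpath_apply, if_neg (fun hc : a = u ∧ b = z ∧ u ≤ z => hne hc.1.symm)]),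
      cpath_apply, if_pos ⟨rfl, hb.1, hb.2⟩]
  · rw [if_neg hb, Finset.sum_eq_zero]
    intro u _
    rw [cpath_apply,
      if_neg (fun hc : a = u ∧ b = z ∧ u ≤ z => hb ⟨hc.2.1, hc.1.trans_le hc.2.2⟩)]

/-- The indicator function of `{u | u ≤ z'}` as an element of `Λ₀`. -/
def chiLe (z' : X) : Lam0 k X := fun u => if u ≤ z' then 1 else 0

lemma diagHom_apply (f : Lam0 k X) (a b : X) :
    diagHom k X f a b = if a = b then f a else 0 := rfl

lemma lam0_smul_lam_def (f : Lam0 k X) (b : Lam k X) : f • b = diagHom k X f * b := rfl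

lemma qel_mul_qel (z' z : X) (h : z' ≤ z) :
    qel k X z' * qel k X z = chiLe k X z' • qel k X z := by
  rw [lam0_smul_lam_def]
  apply IncidenceAlgebra.ext
  intro a b hab
  rw [IncidenceAlgebra.mul_apply, IncidenceAlgebra.mul_apply]
  have hL : ∑ u ∈ Finset.Icc a b, qel k X z' a u * qel k X z u b =
      if a ≤ z' ∧ b = z then 1 else 0 := by
    rw [Finset.sum_eq_single z'
      (fun u _ hne => by
        rw [qel_apply, if_neg (fun hc : u = z' ∧ a ≤ z' => hne hc.1), zero_mul])
      (fun hz' => by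
        rw [qel_apply, qel_apply]
        by_cases h1 : a ≤ z'
        · by_cases h2 : b = z
          · exact absurd (Finset.mem_Icc.2 ⟨h1, h2 ▸ h⟩) hz'
          · rw [if_neg (fun hc : b = z ∧ z' ≤ z => h2 hc.1), mul_zero]
        · rw [if_neg (fun hc : z' = z' ∧ a ≤ z' => h1 hc.2), zero_mul]),
      qel_apply, qel_apply]
    by_cases h1 : a ≤ z'
    · by_cases h2 : b = z
      · rw [if_pos ⟨rfl, h1⟩, if_pos ⟨h2, h⟩, one_mul, if_pos ⟨h1, h2⟩]
      · rw [if_neg (fun hc : b = z ∧ z' ≤ z => h2 hc.1), mul_zero,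
          if_neg (fun hc : a ≤ z' ∧ b = z => h2 hc.2)]
    · rw [if_neg (fun hc : z' = z' ∧ a ≤ z' => h1 hc.2), zero_mul,
        if_neg (fun hc : a ≤ z' ∧ b = z => h1 hc.1)]
  have hR : ∑ u ∈ Finset.Icc a b, diagHom k X (chiLe k X z') a u * qel k X z u b =
      if a ≤ z' ∧ b = z then 1 else 0 := by
    rw [Finset.sum_eq_single_of_mem a (Finset.mem_Icc.2 ⟨le_rfl, hab⟩)
      (fun u _ hne => by
        rw [diagHom_apply, if_neg (fun hc : a = u => hne hc.symm), zero_mul]),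
      diagHom_apply, if_pos rfl, qel_apply]
    show (if a ≤ z' then (1 : k) else 0) * _ = _
    by_cases h1 : a ≤ z'
    · by_cases h2 : b = z
      · rw [if_pos h1, if_pos ⟨h2, h1.trans h⟩, if_pos ⟨h1, h2⟩, one_mul]
      · rw [if_neg (fun hc : b = z ∧ a ≤ z => h2 hc.1), mul_zero,
          if_neg (fun hc : a ≤ z' ∧ b = z => h2 hc.2)]
    · rw [if_neg h1, zero_mul, if_neg (fun hc : a ≤ z' ∧ b = z => h1 hc.1)]
  rw [hL, hR]

lemma lam0_smul_supported_coe (C : ∀ i : ℕ, Set (Amb k X i)) (i : ℕ) (f : Lam0 k X)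
    (m : ↥(Finsupp.supported k k (C i))) :
    ((f • m : ↥(Finsupp.supported k k (C i))) : Amb k X i →₀ k) = phiAmb k X i f ↑m := rfl

lemma chi_smul_eq (C : ∀ i : ℕ, Set (Amb k X i)) (i : ℕ) (z' : X)
    (m : ↥(Finsupp.supported k k (C i)))
    (hm : ∀ t ∈ (↑m : Amb k X i →₀ k).support, vtx k X i t ≤ z') :
    chiLe k X z' • m = m := by
  apply Subtype.ext
  rw [lam0_smul_supported_coe]
  ext q
  rw [phiAmb_apply]
  by_cases hq : (↑m : Amb k X i →₀ k) q = 0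
  · rw [hq, mul_zero]
  · have hle := hm q (Finsupp.mem_support_iff.2 hq)
    rw [chiLe]
    simp [hle]

lemma const_smul_eq (C : ∀ i : ℕ, Set (Amb k X i)) (i : ℕ) (c : k)
    (m : ↥(Finsupp.supported k k (C i))) :
    ((fun _ => c : Lam0 k X)) • m = c • m := by
  apply Subtype.ext
  rw [lam0_smul_supported_coe]
  ext q
  rw [phiAmb_apply]
  rfl

lemma diag_const (c : k) : diagHom k X (fun _ => c : Lam0 k X) = c • (1 : Lam k X) := by
  apply IncidenceAlgebra.ext
  intro a b _
  rw [diagHom_apply, IncidenceAlgebra.constSMul_apply, IncidenceAlgebra.one_apply]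
  by_cases hab : a = b <;> simp [hab]

lemma ksmul_tmul (C : ∀ i : ℕ, Set (Amb k X i)) (i : ℕ) (c : k)
    (m : ↥(Finsupp.supported k k (C i))) (l : Lam k X) :
    ((c • m) ⊗ₜ[Lam0 k X] l : TCmod k X C i) = m ⊗ₜ[Lam0 k X] (c • l) := by
  rw [← const_smul_eq, TensorProduct.smul_tmul]
  congr 1
  rw [lam0_smul_lam_def, diag_const, smul_mul_assoc, one_mul]

lemma ksmul_tmul_op (C : ∀ i : ℕ, Set (Amb k X i)) (i : ℕ) (c : k)
    (m : ↥(Finsupp.supported k k (C i))) (l : Lam k X) :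
    ((c • m) ⊗ₜ[Lam0 k X] l : TCmod k X C i) =
      (MulOpposite.op (c • (1 : Lam k X))) • (m ⊗ₜ[Lam0 k X] l : TCmod k X C i) := by
  rw [ksmul_tmul]; erw [opSmul_tmul]
  congr 1
  rw [mul_smul_comm, mul_one]

lemma mem_Kz_of_memC {x : X} (D : CycleData k X x) (i : ℕ) (p : Amb k X (i + 2))
    (hp : p ∈ D.C (i + 2)) : p.1 ∈ Kz k X D.C i p.2 := by
  have hb : p.1 ∈ Bset k X D.C i p.2 := by
    show (⟨p.1, p.2⟩ : Amb k X (i + 2)) ∈ D.C (i + 2)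
    exact hp
  have hle : Submodule.span k (Bset k X D.C i p.2) ≤ Kz k X D.C i p.2 := by
    rw [← D.compl i p.2]; exact le_sup_left
  exact hle (Submodule.subset_span hb)

lemma memC_fst {x : X} (D : CycleData k X x) (i : ℕ) (p : Amb k X (i + 1))
    (hp : p ∈ D.C (i + 1)) :
    p.1 ∈ Finsupp.supported k k (D.C i) ∧
      ∀ t ∈ (p.1 : Amb k X i →₀ k).support, vtx k X i t < p.2 := by
  cases i with
  | zero =>
    rw [D.hC1] at hp
    obtain ⟨y, hxy, rfl⟩ := hp
    refine ⟨Finsupp.single_mem_supported k 1 (by rw [D.hC0]; rfl), ?_⟩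
    intro t ht
    have htx : t = x := Finset.mem_singleton.1 (Finsupp.support_single_subset ht)
    show vtx k X 0 t < y
    rw [htx]
    exact hxy.lt
  | succ j =>
    have hk := mem_Kz_of_memC k X D j p hp
    rw [Kz] at hk
    obtain ⟨h1, hlt⟩ := Submodule.mem_inf.1 hk
    obtain ⟨-, hsup⟩ := Submodule.mem_inf.1 h1
    exact ⟨hsup, fun t ht => (Finsupp.mem_supported k _).1 hlt ht⟩

lemma memC_ker {x : X} (D : CycleData k X x) (i : ℕ) (p : Amb k X (i + 2))
    (hp : p ∈ D.C (i + 2)) : bd k X i p.1 = 0 := by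
  have hk := mem_Kz_of_memC k X D i p hp
  rw [Kz] at hk
  obtain ⟨hker, -⟩ := Submodule.mem_inf.1 (Submodule.mem_inf.1 hk).1
  exact LinearMap.mem_ker.1 hker

lemma d_tmul_qel {x : X} (D : CycleData k X x)
    (d : ∀ i : ℕ, TCmod k X D.C (i + 1) →ₗ[(Lam k X)ᵐᵒᵖ] TCmod k X D.C i)
    (hd : IsDiff k X D d) (i : ℕ) (z : X)
    (v : Amb k X (i + 1) →₀ k) (hvC : v ∈ Finsupp.supported k k (D.C (i + 1)))
    (hvz : ∀ t ∈ v.support, vtx k X (i + 1) t < z) :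
    ∃ hb : bd k X i v ∈ Finsupp.supported k k (D.C i),
      d i ((⟨v, hvC⟩ : ↥(Finsupp.supported k k (D.C (i + 1)))) ⊗ₜ[Lam0 k X] qel k X z) =
        (⟨bd k X i v, hb⟩ : ↥(Finsupp.supported k k (D.C i))) ⊗ₜ[Lam0 k X] qel k X z := by
  set S' : Set (Amb k X (i + 1)) := D.C (i + 1) ∩ {t | vtx k X (i + 1) t < z} with hS'
  have hvS : v ∈ Finsupp.supported k k S' := by
    rw [Finsupp.mem_supported k]
    intro t ht
    exact ⟨(Finsupp.mem_supported k _).1 hvC ht, hvz t ht⟩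
  have hspan : Submodule.span k ((fun t => Finsupp.single t (1 : k)) '' S') ≤
      Finsupp.supported k k (D.C (i + 1)) := by
    rw [← Finsupp.supported_eq_span_single]
    exact Finsupp.supported_mono Set.inter_subset_left
  rw [Finsupp.supported_eq_span_single] at hvS
  clear hvz
  revert hvC
  induction hvS using Submodule.span_induction with
  | mem w hw =>
    obtain ⟨t, ⟨htC, htz⟩, rfl⟩ := hw
    intro hvC
    have hfst := memC_fst k X D i t htC
    have hbd : bd k X i (Finsupp.single t (1 : k)) = t.1 := by
      rw [bd, Finsupp.linearCombination_single, one_smul]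
    refine ⟨hbd ▸ hfst.1, ?_⟩
    have hbas : (⟨Finsupp.single t (1 : k), hvC⟩ :
        ↥(Finsupp.supported k k (D.C (i + 1)))) = bas k X D.C (i + 1) t htC := rfl
    rw [hbas]
    have h1 : (bas k X D.C (i + 1) t htC) ⊗ₜ[Lam0 k X] qel k X z =
        (MulOpposite.op (qel k X z)) • gen k X D.C (i + 1) t htC := by
      rw [gen]; erw [opSmul_tmul]; rw [one_mul]
    rw [h1, map_smul]
    rw [hd i t htC ⟨t.1, hfst.1⟩ rfl]
    have hvtx : vtx k X (i + 1) t = t.2 := rfl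
    rw [hvtx]; erw [opSmul_tmul]; rw [qel_mul_qel k X t.2 z (le_of_lt htz),
      ← TensorProduct.smul_tmul, chi_smul_eq k X D.C i t.2 ⟨t.1, hfst.1⟩
        (fun q hq => le_of_lt (hfst.2 q hq))]
    apply congrArg (fun u => u ⊗ₜ[Lam0 k X] qel k X z)
    apply Subtype.ext
    show (t.1 : Amb k X i →₀ k) = bd k X i (Finsupp.single t (1 : k))
    rw [hbd]
  | zero =>
    intro hvC
    refine ⟨by rw [map_zero]; exact Submodule.zero_mem _, ?_⟩
    have h0 : (⟨(0 : Amb k X (i + 1) →₀ k), hvC⟩ :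
        ↥(Finsupp.supported k k (D.C (i + 1)))) = 0 := rfl
    have h0' : (⟨bd k X i 0, by rw [map_zero]; exact Submodule.zero_mem _⟩ :
        ↥(Finsupp.supported k k (D.C i))) = 0 := by
      apply Subtype.ext; show bd k X i 0 = 0; rw [map_zero]
    erw [h0, h0', TensorProduct.zero_tmul, TensorProduct.zero_tmul, map_zero]; rfl
  | add a b ha hb iha ihb =>
    intro hvC
    obtain ⟨hba, ea⟩ := iha (hspan ha)
    obtain ⟨hbb, eb⟩ := ihb (hspan hb)
    refine ⟨by rw [map_add]; exact Submodule.add_mem _ hba hbb, ?_⟩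
    have hadd : (⟨a + b, hvC⟩ :
        ↥(Finsupp.supported k k (D.C (i + 1)))) = ⟨a, hspan ha⟩ + ⟨b, hspan hb⟩ := rfl
    have hadd' : (⟨bd k X i (a + b), by rw [map_add]; exact Submodule.add_mem _ hba hbb⟩ :
        ↥(Finsupp.supported k k (D.C i))) = ⟨bd k X i a, hba⟩ + ⟨bd k X i b, hbb⟩ := by
      apply Subtype.ext; show bd k X i (a + b) = bd k X i a + bd k X i b; rw [map_add]
    erw [hadd, hadd', TensorProduct.add_tmul, TensorProduct.add_tmul, map_add, ea, eb]; rfl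
  | smul c w hw ihw =>
    intro hvC
    obtain ⟨hbw, ew⟩ := ihw (hspan hw)
    refine ⟨by rw [map_smul]; exact Submodule.smul_mem _ _ hbw, ?_⟩
    have hsm : (⟨c • w, hvC⟩ :
        ↥(Finsupp.supported k k (D.C (i + 1)))) = c • ⟨w, hspan hw⟩ := rfl
    have hsm' : (⟨bd k X i (c • w), by rw [map_smul]; exact Submodule.smul_mem _ _ hbw⟩ :
        ↥(Finsupp.supported k k (D.C i))) = c • ⟨bd k X i w, hbw⟩ := by
      apply Subtype.ext; show bd k X i (c • w) = c • bd k X i w; rw [map_smul]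
    erw [hsm, hsm', ksmul_tmul_op, ksmul_tmul_op, map_smul, ew]; rfl

end Auxiliary

/-- `d_{i-1} ∘ d_i = 0` for every `i ≥ 2`: the sequence
`⋯ → kC^2⊗Λ → kC^1⊗Λ → kC^0⊗Λ → 0` is a chain complex of right `Λ`-modules. -/
theorem stmt3 (x : X) (D : CycleData k X x)
    (d : ∀ i : ℕ, TCmod k X D.C (i + 1) →ₗ[(Lam k X)ᵐᵒᵖ] TCmod k X D.C i)
    (hd : IsDiff k X D d) (i : ℕ) :
    (d i).comp (d (i + 1)) = 0 := by
  apply LinearMap.ext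
  intro t
  rw [LinearMap.comp_apply, LinearMap.zero_apply]
  induction t using TensorProduct.induction_on with
  | zero => erw [map_zero, map_zero]
  | add a b ha hb => erw [map_add, map_add, ha, hb, add_zero]
  | tmul m lam =>
    obtain ⟨v, hv⟩ := m
    have hspan : Submodule.span k ((fun t => Finsupp.single t (1 : k)) '' (D.C (i + 2))) ≤
        Finsupp.supported k k (D.C (i + 2)) :=
      (Finsupp.supported_eq_span_single k (D.C (i + 2))).ge
    have hv' := hv
    rw [Finsupp.supported_eq_span_single] at hv'
    revert lam
    revert hv
    induction hv' using Submodule.span_induction with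
    | mem w hw =>
      obtain ⟨p, hp, rfl⟩ := hw
      intro hv lam
      have hfst := memC_fst k X D (i + 1) p hp
      have hbas : (⟨Finsupp.single p (1 : k), hv⟩ :
          ↥(Finsupp.supported k k (D.C (i + 2)))) = bas k X D.C (i + 2) p hp := rfl
      have h1 : (bas k X D.C (i + 2) p hp) ⊗ₜ[Lam0 k X] lam =
          (MulOpposite.op lam) • gen k X D.C (i + 2) p hp := by
        rw [gen]; erw [opSmul_tmul]; rw [one_mul]
      erw [hbas, h1, map_smul, hd (i + 1) p hp ⟨p.1, hfst.1⟩ rfl, map_smul]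
      have hvtx : vtx k X (i + 2) p = p.2 := rfl
      rw [hvtx]
      obtain ⟨hb, e⟩ := d_tmul_qel k X D d hd i p.2 p.1 hfst.1 hfst.2
      rw [e]
      have hz : (⟨bd k X i p.1, hb⟩ : ↥(Finsupp.supported k k (D.C i))) = 0 := by
        apply Subtype.ext; exact memC_ker k X D i p hp
      erw [hz, TensorProduct.zero_tmul, smul_zero]
    | zero =>
      intro hv lam
      have h0 : (⟨(0 : Amb k X (i + 2) →₀ k), hv⟩ :
          ↥(Finsupp.supported k k (D.C (i + 2)))) = 0 := rfl
      erw [h0, TensorProduct.zero_tmul, map_zero, map_zero]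
    | add a b ha hb iha ihb =>
      intro hv lam
      have hadd : (⟨a + b, hv⟩ :
          ↥(Finsupp.supported k k (D.C (i + 2)))) = ⟨a, hspan ha⟩ + ⟨b, hspan hb⟩ := rfl
      erw [hadd, TensorProduct.add_tmul, map_add, map_add, iha (hspan ha) lam,
        ihb (hspan hb) lam, add_zero]
    | smul c w hw ihw =>
      intro hv lam
      have hsm : (⟨c • w, hv⟩ :
          ↥(Finsupp.supported k k (D.C (i + 2)))) = c • ⟨w, hspan hw⟩ := rfl
      rw [hsm, ksmul_tmul]
      exact ihw (hspan hw) (c • lam)
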